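/- arXiv:1309.5184 — 4 statements merged into one kernel-verified Lean document; each statement's English description precedes it below -/
import Mathlib

section
/- If there exists a complete accepting tableau branch containing the initial prefixed formula (1,1) φ, then the RML^∃ formula φ is satisfiable. -/
/-! The branch is read as a family of Kripke models on state prefixes, one for each model prefix
`r :: μ`: `σ` sees `σ ++ [i]` when `σ ++ [i]` labels some formula whose model prefix extends
`r :: μ`, and the valuation is read off at the root model prefix `[r]`, where the literal rule
collects every literal of the family. Extending the model prefix only removes edges, so the
identity is a refinement mapping into the extended model; the truth lemma then follows by
induction on the formula, with completeness supplying the witnesses and acceptance ruling out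
clashes. -/

/-- RML^∃ formulas: p | ¬p | φ∧φ | φ∨φ | ◇φ | □φ | ∃_r φ -/
inductive RML : Type where
  | pos : ℕ → RML
  | neg : ℕ → RML
  | and : RML → RML → RML
  | or  : RML → RML → RML
  | dia : RML → RML
  | box : RML → RML
  | ex  : RML → RML

/-- A Kripke model over a state type `W`. -/
structure Kripke (W : Type) where
  R : W → W → Prop
  V : W → Set ℕ

/-- `ρ` is a refinement mapping from `M` to `M'`: a non-empty relation
satisfying the atom and back conditions. -/
def RefinementMapping {W W' : Type} (M : Kripke W) (M' : Kripke W')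
    (ρ : W → W' → Prop) : Prop :=
  (∃ s s', ρ s s') ∧
  (∀ s s', ρ s s' → M.V s = M'.V s') ∧
  (∀ s s' t', ρ s s' → M'.R s' t' → ∃ t, M.R s t ∧ ρ t t')

/-- `(M', s')` is a refinement of `(M, s)`. -/
def RefinementOf {W W' : Type} (M' : Kripke W') (s' : W')
    (M : Kripke W) (s : W) : Prop :=
  ∃ ρ, RefinementMapping M M' ρ ∧ ρ s s'

/-- Semantics of RML^∃ formulas. -/
def Sat {W : Type} (M : Kripke W) : W → RML → Prop
  | s, RML.pos p => p ∈ M.V s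
  | s, RML.neg p => p ∉ M.V s
  | s, RML.and ψ₁ ψ₂ => Sat M s ψ₁ ∧ Sat M s ψ₂
  | s, RML.or ψ₁ ψ₂ => Sat M s ψ₁ ∨ Sat M s ψ₂
  | s, RML.dia ψ => ∃ t, M.R s t ∧ Sat M t ψ
  | s, RML.box ψ => ∀ t, M.R s t → Sat M t ψ
  | s, RML.ex ψ => ∃ (W' : Type) (M' : Kripke W') (s' : W'),
      RefinementOf M' s' M s ∧ Sat M' s' ψ

def Satisfiable (φ : RML) : Prop :=
  ∃ (W : Type) (M : Kripke W) (s : W), Sat M s φ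

/-- Prefixed formulas `(μ, σ) ψ`: a model prefix, a state prefix, a formula. -/
abbrev PrefixedFormula : Type := List ℕ × List ℕ × RML

def IsLiteral : RML → Prop
  | RML.pos _ => True
  | RML.neg _ => True
  | _ => False

/-- `Branch φ b` holds when `b` is obtained from `{(1,1) φ}` by repeatedly
applying the tableau rules. -/
inductive Branch (φ : RML) : Set PrefixedFormula → Prop
  | init : Branch φ {([1], [1], φ)}
  | andRule {b μ σ ψ₁ ψ₂} : Branch φ b → (μ, σ, RML.and ψ₁ ψ₂) ∈ b →
      Branch φ (insert (μ, σ, ψ₁) (insert (μ, σ, ψ₂) b))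
  | orLeft {b μ σ ψ₁ ψ₂} : Branch φ b → (μ, σ, RML.or ψ₁ ψ₂) ∈ b →
      Branch φ (insert (μ, σ, ψ₁) b)
  | orRight {b μ σ ψ₁ ψ₂} : Branch φ b → (μ, σ, RML.or ψ₁ ψ₂) ∈ b →
      Branch φ (insert (μ, σ, ψ₂) b)
  | litRule {b μ ν σ l} : Branch φ b → (μ ++ ν, σ, l) ∈ b → IsLiteral l →
      μ ≠ [] → ν ≠ [] → Branch φ (insert (μ, σ, l) b)
  | diaRule {b μ σ ψ} (i : ℕ) : Branch φ b → (μ, σ, RML.dia ψ) ∈ b →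
      (∀ μ' χ, (μ', σ ++ [i], χ) ∉ b) →
      Branch φ (insert (μ, σ ++ [i], ψ) b)
  | exRule {b μ σ ψ} (m : ℕ) : Branch φ b → (μ, σ, RML.ex ψ) ∈ b →
      (∀ σ' χ, (μ ++ [m], σ', χ) ∉ b) →
      Branch φ (insert (μ ++ [m], σ, ψ) b)
  | boxRule {b μ ν σ ψ i χ} : Branch φ b → (μ, σ, RML.box ψ) ∈ b →
      (μ ++ ν, σ ++ [i], χ) ∈ b →
      Branch φ (insert (μ, σ ++ [i], ψ) b)

/-- A branch is complete when every applicable rule has been applied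
exhaustively. -/
def Complete (b : Set PrefixedFormula) : Prop :=
  (∀ μ σ ψ₁ ψ₂, (μ, σ, RML.and ψ₁ ψ₂) ∈ b → (μ, σ, ψ₁) ∈ b ∧ (μ, σ, ψ₂) ∈ b) ∧
  (∀ μ σ ψ₁ ψ₂, (μ, σ, RML.or ψ₁ ψ₂) ∈ b → (μ, σ, ψ₁) ∈ b ∨ (μ, σ, ψ₂) ∈ b) ∧
  (∀ μ ν σ l, IsLiteral l → μ ≠ [] → ν ≠ [] → (μ ++ ν, σ, l) ∈ b → (μ, σ, l) ∈ b) ∧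
  (∀ μ σ ψ, (μ, σ, RML.dia ψ) ∈ b → ∃ i, (μ, σ ++ [i], ψ) ∈ b) ∧
  (∀ μ σ ψ, (μ, σ, RML.ex ψ) ∈ b → ∃ m, (μ ++ [m], σ, ψ) ∈ b) ∧
  (∀ μ ν σ i ψ χ, (μ, σ, RML.box ψ) ∈ b → (μ ++ ν, σ ++ [i], χ) ∈ b →
      (μ, σ ++ [i], ψ) ∈ b)

/-- A complete branch is accepting if it contains no clash. -/
def Accepting (b : Set PrefixedFormula) : Prop :=
  ¬ ∃ μ σ p, (μ, σ, RML.pos p) ∈ b ∧ (μ, σ, RML.neg p) ∈ b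

def branchModel (b : Set PrefixedFormula) (r : ℕ) (μ : List ℕ) : Kripke (List ℕ) where
  R σ τ := ∃ i, τ = σ ++ [i] ∧ ∃ ν χ, (r :: μ ++ ν, τ, χ) ∈ b
  V σ := {p | ([r], σ, RML.pos p) ∈ b}

lemma refinementMapping_branchModel_append (b : Set PrefixedFormula) (r : ℕ) (μ : List ℕ)
    (m : ℕ) : RefinementMapping (branchModel b r μ) (branchModel b r (μ ++ [m])) Eq := by
  refine ⟨⟨[], [], rfl⟩, fun s s' hs => hs ▸ rfl, ?_⟩
  rintro s _ t' rfl ⟨i, rfl, ν, χ, hν⟩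
  exact ⟨s ++ [i], ⟨i, rfl, m :: ν, χ, by simpa using hν⟩, rfl⟩

variable {b : Set PrefixedFormula}

lemma Complete.mem_root_of_isLiteral (hc : Complete b) {r : ℕ} {μ σ : List ℕ} {l : RML}
    (hl : IsLiteral l) (h : (r :: μ, σ, l) ∈ b) : ([r], σ, l) ∈ b := by
  rcases μ with _ | ⟨a, μ⟩
  · exact h
  · exact hc.2.2.1 [r] (a :: μ) σ l hl (List.cons_ne_nil _ _) (List.cons_ne_nil _ _) h

lemma sat_branchModel_of_mem (hc : Complete b) (ha : Accepting b) {ψ : RML} {r : ℕ}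
    {μ σ : List ℕ} (h : (r :: μ, σ, ψ) ∈ b) : Sat (branchModel b r μ) σ ψ := by
  obtain ⟨hand, hor, -, hdia, hex, hbox⟩ := id hc
  induction ψ generalizing μ σ with
  | pos p => exact hc.mem_root_of_isLiteral trivial h
  | neg p => exact fun hp => ha ⟨[r], σ, p, hp, hc.mem_root_of_isLiteral trivial h⟩
  | and ψ₁ ψ₂ ih₁ ih₂ =>
      obtain ⟨h₁, h₂⟩ := hand _ _ _ _ h
      exact ⟨ih₁ h₁, ih₂ h₂⟩
  | or ψ₁ ψ₂ ih₁ ih₂ => exact (hor _ _ _ _ h).imp ih₁ ih₂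
  | dia ψ ih =>
      obtain ⟨i, hi⟩ := hdia _ _ _ h
      exact ⟨σ ++ [i], ⟨i, rfl, [], ψ, by simpa using hi⟩, ih hi⟩
  | box ψ ih =>
      rintro _ ⟨i, rfl, ν, χ, hν⟩
      exact ih (hbox _ ν σ i ψ χ h hν)
  | ex ψ ih =>
      obtain ⟨m, hm⟩ := hex _ _ _ h
      exact ⟨List ℕ, branchModel b r (μ ++ [m]), σ,
        ⟨Eq, refinementMapping_branchModel_append b r μ m, rfl⟩, ih hm⟩

theorem complete_accepting_branch_implies_satisfiable_general (φ : RML)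
    (b : Set PrefixedFormula) (hmem : ([1], [1], φ) ∈ b)
    (hcomplete : Complete b) (haccept : Accepting b) :
    Satisfiable φ :=
  ⟨List ℕ, branchModel b 1 [], [1], sat_branchModel_of_mem hcomplete haccept hmem⟩

/-- If there exists a complete accepting tableau branch containing
the initial prefixed formula `(1,1) φ`, then `φ` is satisfiable. -/
theorem complete_accepting_branch_implies_satisfiable (φ : RML)
    (b : Set PrefixedFormula) (hb : Branch φ b) (hmem : ([1], [1], φ) ∈ b)
    (hcomplete : Complete b) (haccept : Accepting b) :
    Satisfiable φ :=
  complete_accepting_branch_implies_satisfiable_general φ b hmem hcomplete haccept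
end

section
/- An RML^∃ formula φ is satisfiable if and only if there exists a complete accepting tableau branch starting from the initial prefixed formula (1,1) φ. -/
/-!
An accepting complete branch is read as a family of models, one for each model prefix `μ`, whose
states are the state prefixes occurring at extensions of `μ`; the model at `μ.m` refines the one
at `μ` through the identity, and the truth lemma is an induction on formulas.

Conversely, a model of `φ` guides a saturation of the branch that assigns a pointed model to
every prefix pair `(μ, σ)`: models at longer model prefixes refine those at shorter ones, `σ.i`
denotes a successor of `σ`, and every formula on the branch holds at its pointed model. The
`∨`-rule follows the true disjunct, the `∃_r`-rule uses a refinement witness at a fresh model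
prefix, and the `◇`-rule pulls a successor back along the chain of refinements below `μ`, so
that boxes at shorter model prefixes still apply to it. Each rule replaces a pending formula by
formulas of smaller rank, so the multiset of pending ranks decreases in the Dershowitz–Manna
order and the saturation terminates.
-/

theorem Branch.init_mem {φ : RML} {b : Set PrefixedFormula} (h : Branch φ b) :
    ([1], [1], φ) ∈ b := by
  induction h <;> simp_all [Set.mem_insert_iff]

theorem Branch.one_prefix {φ : RML} {b : Set PrefixedFormula} (h : Branch φ b) :
    ∀ x ∈ b, [1] <+: x.1 := by
  induction h with
  | init => rintro x rfl; exact List.prefix_refl _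
  | andRule _ hm ih => rintro x (rfl | rfl | hx); exacts [(ih _ hm :), (ih _ hm :), ih _ hx]
  | orLeft _ hm ih | orRight _ hm ih | diaRule _ _ hm _ ih | boxRule _ hm _ ih =>
    rintro x (rfl | hx); exacts [(ih _ hm :), ih _ hx]
  | litRule _ hm _ hμ _ ih =>
    rintro x (rfl | hx)
    · exact List.prefix_of_prefix_length_le (ih _ hm) (List.prefix_append _ _)
        (List.length_pos_iff.mpr hμ)
    · exact ih _ hx
  | exRule _ _ hm _ ih =>
    rintro x (rfl | hx); exacts [(ih _ hm).trans (List.prefix_append _ _), ih _ hx]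

theorem Complete.mem_one_of_isLiteral {φ : RML} {b : Set PrefixedFormula} (hC : Complete b)
    (hB : Branch φ b) {μ σ : List ℕ} {l : RML} (hl : IsLiteral l) (h : (μ, σ, l) ∈ b) :
    ([1], σ, l) ∈ b := by
  obtain ⟨ν, rfl⟩ := hB.one_prefix _ h
  rcases eq_or_ne ν [] with rfl | hν
  · simpa using h
  · exact hC.2.2.1 [1] ν σ l hl (by simp) hν h

/-- One model per model prefix `μ`, on the state prefixes; the valuation may read literals at any
model prefix because refinements preserve valuations. -/
def canonicalModel (b : Set PrefixedFormula) (μ : List ℕ) : Kripke (List ℕ) where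
  R σ τ := ∃ i, τ = σ ++ [i] ∧ ∃ ν χ, (μ ++ ν, τ, χ) ∈ b
  V σ := {p | ∃ μ', (μ', σ, RML.pos p) ∈ b}

theorem sat_canonicalModel {φ : RML} {b : Set PrefixedFormula} (hB : Branch φ b)
    (hC : Complete b) (hA : Accepting b) (ψ : RML) :
    ∀ μ σ, (μ, σ, ψ) ∈ b → Sat (canonicalModel b μ) σ ψ := by
  induction ψ with
  | pos p => exact fun μ σ h => ⟨μ, h⟩
  | neg p =>
    rintro μ σ h ⟨μ', h'⟩
    exact hA ⟨[1], σ, p, hC.mem_one_of_isLiteral hB trivial h',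
      hC.mem_one_of_isLiteral hB trivial h⟩
  | and ψ₁ ψ₂ ih₁ ih₂ =>
    intro μ σ h
    exact ⟨ih₁ _ _ (hC.1 _ _ _ _ h).1, ih₂ _ _ (hC.1 _ _ _ _ h).2⟩
  | or ψ₁ ψ₂ ih₁ ih₂ =>
    intro μ σ h
    exact (hC.2.1 _ _ _ _ h).imp (ih₁ _ _) (ih₂ _ _)
  | dia ψ ih =>
    intro μ σ h
    obtain ⟨i, hi⟩ := hC.2.2.2.1 _ _ _ h
    exact ⟨σ ++ [i], ⟨i, rfl, [], ψ, by simpa using hi⟩, ih _ _ hi⟩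
  | box ψ ih =>
    rintro μ σ h _ ⟨i, rfl, ν, χ, hocc⟩
    exact ih _ _ (hC.2.2.2.2.2 μ ν σ i ψ χ h hocc)
  | ex ψ ih =>
    intro μ σ h
    obtain ⟨m, hm⟩ := hC.2.2.2.2.1 _ _ _ h
    refine ⟨List ℕ, canonicalModel b (μ ++ [m]), σ, ⟨Eq, ⟨⟨σ, σ, rfl⟩, ?_, ?_⟩, rfl⟩,
      ih _ _ hm⟩
    · rintro s _ rfl; rfl
    · rintro s _ _ rfl ⟨i, rfl, ν, χ, hocc⟩
      exact ⟨s ++ [i], ⟨i, rfl, [m] ++ ν, χ, by simpa using hocc⟩, rfl⟩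

structure PointedModel where
  W : Type
  M : Kripke W
  pt : W

namespace PointedModel

def Sat (x : PointedModel) (ψ : RML) : Prop := _root_.Sat x.M x.pt ψ

def Refines (x y : PointedModel) : Prop := RefinementOf x.M x.pt y.M y.pt

def Succ (x y : PointedModel) : Prop := ∃ t, x.M.R x.pt t ∧ y = ⟨x.W, x.M, t⟩

theorem Refines.refl (x : PointedModel) : x.Refines x := by
  refine ⟨Eq, ⟨⟨x.pt, x.pt, rfl⟩, ?_, ?_⟩, rfl⟩
  · rintro s _ rfl; rfl
  · rintro s _ t rfl h; exact ⟨t, h, rfl⟩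

theorem Refines.trans {x y z : PointedModel} (hxy : x.Refines y) (hyz : y.Refines z) :
    x.Refines z := by
  obtain ⟨ρ, ⟨-, hatom, hback⟩, hpt⟩ := hxy
  obtain ⟨ρ', ⟨-, hatom', hback'⟩, hpt'⟩ := hyz
  refine ⟨fun c a => ∃ b, ρ' c b ∧ ρ b a, ⟨⟨z.pt, x.pt, y.pt, hpt', hpt⟩, ?_, ?_⟩,
    y.pt, hpt', hpt⟩
  · rintro s s' ⟨b, h₁, h₂⟩
    rw [hatom' _ _ h₁, hatom _ _ h₂]
  · rintro s s' t' ⟨b, h₁, h₂⟩ hR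
    obtain ⟨tb, hRb, h₃⟩ := hback _ _ _ h₂ hR
    obtain ⟨tc, hRc, h₄⟩ := hback' _ _ _ h₁ hRb
    exact ⟨tc, hRc, tb, h₄, h₃⟩

theorem Refines.sat_iff_of_isLiteral {x y : PointedModel} (h : x.Refines y) {l : RML}
    (hl : IsLiteral l) : y.Sat l ↔ x.Sat l := by
  obtain ⟨ρ, ⟨-, hatom, -⟩, hpt⟩ := h
  cases l with
  | pos p => exact Iff.of_eq (congrArg (p ∈ ·) (hatom _ _ hpt))
  | neg p => exact Iff.of_eq (congrArg (p ∉ ·) (hatom _ _ hpt))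
  | _ => exact hl.elim

theorem Refines.exists_succ {x y x' : PointedModel} (h : x.Refines y) (hx : x.Succ x') :
    ∃ y', y.Succ y' ∧ x'.Refines y' := by
  obtain ⟨ρ, ⟨hne, hatom, hback⟩, hpt⟩ := h
  obtain ⟨t, ht, rfl⟩ := hx
  obtain ⟨u, hu, hρ⟩ := hback _ _ _ hpt ht
  exact ⟨⟨y.W, y.M, u⟩, ⟨u, hu, rfl⟩, ρ, ⟨hne, hatom, hback⟩, hρ⟩

theorem Succ.sat_of_sat_box {x y : PointedModel} (h : x.Succ y) {ψ : RML}
    (hx : x.Sat (RML.box ψ)) : y.Sat ψ := by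
  obtain ⟨t, ht, rfl⟩ := h
  exact hx t ht

theorem refines_of_le {f : ℕ → PointedModel} (hf : ∀ k, (f (k + 1)).Refines (f k)) {j k : ℕ}
    (h : j ≤ k) : (f k).Refines (f j) := by
  induction h with
  | refl => exact .refl _
  | step _ ih => exact (hf _).trans ih

theorem exists_succ_chain {g : ℕ → PointedModel} (hg : ∀ k, (g (k + 1)).Refines (g k)) :
    ∀ (L : ℕ) {y : PointedModel}, (g L).Succ y → ∃ f : ℕ → PointedModel, f L = y ∧
      (∀ k ≤ L, (g k).Succ (f k)) ∧ ∀ k, (f (k + 1)).Refines (f k) := by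
  intro L
  induction L with
  | zero =>
    intro y hy
    refine ⟨fun _ => y, rfl, fun k hk => ?_, fun _ => .refl _⟩
    rwa [Nat.le_zero.mp hk]
  | succ L ih =>
    intro y hy
    obtain ⟨y', hy', hyy'⟩ := (hg L).exists_succ hy
    obtain ⟨f, hfL, hfsucc, hfref⟩ := ih hy'
    refine ⟨fun k => if L + 1 ≤ k then y else f k, by simp, fun k hk => ?_, fun k => ?_⟩
    · rcases hk.eq_or_lt with rfl | hk
      · simpa using hy
      · simpa [Nat.not_le.mpr hk] using hfsucc k (Nat.lt_succ_iff.mp hk)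
    · rcases lt_trichotomy k L with hk | rfl | hk
      · simpa only [if_neg (by omega : ¬ L + 1 ≤ k + 1), if_neg (by omega : ¬ L + 1 ≤ k)]
          using hfref k
      · simpa [hfL] using hyy'
      · simpa only [if_pos (by omega : L + 1 ≤ k + 1), if_pos (by omega : L + 1 ≤ k)]
          using Refines.refl y

theorem exists_succ_along_prefixes {m : List ℕ → PointedModel} {μ : List ℕ}
    (hm : ∀ π π', π <+: π' → π' <+: μ → (m π').Refines (m π)) {ψ : RML}
    (hμ : (m μ).Sat (.dia ψ)) :
    ∃ f : List ℕ → PointedModel, (∀ π π', π <+: π' → π' <+: μ → (f π').Refines (f π)) ∧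
      (∀ π, π <+: μ → (m π).Succ (f π)) ∧ (f μ).Sat ψ := by
  obtain ⟨t, ht, hψ⟩ := hμ
  obtain ⟨F, hFμ, hFsucc, hFref⟩ := exists_succ_chain (g := fun k => m (μ.take k))
    (fun k => hm _ _ (List.take_prefix_take_left (Nat.le_succ k)) (List.take_prefix _ _))
    μ.length (y := ⟨_, (m μ).M, t⟩) (by rw [List.take_length]; exact ⟨t, ht, rfl⟩)
  refine ⟨fun π => F π.length, fun π π' h _ => refines_of_le hFref h.length_le,
    fun π h => ?_, ?_⟩
  · simpa only [← List.prefix_iff_eq_take.mp h] using hFsucc π.length h.length_le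
  · show (F μ.length).Sat ψ
    rw [hFμ]
    exact hψ

end PointedModel

theorem Branch.append {φ : RML} {b : List PrefixedFormula} (hb : Branch φ {y | y ∈ b})
    {L : List PrefixedFormula}
    (hL : ∀ y ∈ L, ∀ s : Set PrefixedFormula, {z | z ∈ b} ⊆ s → Branch φ s →
      Branch φ (insert y s)) :
    Branch φ {y | y ∈ L ++ b} := by
  induction L with
  | nil => simpa using hb
  | cons y L ih =>
    have h := hL y (.head _) _ (fun z hz => List.mem_append_right L hz)
      (ih fun w hw => hL w (.tail _ hw))
    rwa [show {z | z ∈ y :: L ++ b} = insert y {z | z ∈ L ++ b} by ext; simp]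

namespace RML

def size : RML → ℕ
  | pos _ | neg _ => 1
  | and ψ₁ ψ₂ | or ψ₁ ψ₂ => ψ₁.size + ψ₂.size + 1
  | dia ψ | box ψ | ex ψ => ψ.size + 1

def modalDepth : RML → ℕ
  | pos _ | neg _ => 0
  | and ψ₁ ψ₂ | or ψ₁ ψ₂ => max ψ₁.modalDepth ψ₂.modalDepth
  | dia ψ | box ψ => ψ.modalDepth + 1
  | ex ψ => ψ.modalDepth

end RML

namespace Tableau

def Occurs (b : List PrefixedFormula) (μ σ : List ℕ) : Prop :=
  ∃ μ' χ, (μ', σ, χ) ∈ b ∧ μ <+: μ'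

theorem occurs_of_mem {b : List PrefixedFormula} {μ σ : List ℕ} {ψ : RML}
    (h : (μ, σ, ψ) ∈ b) : Occurs b μ σ :=
  ⟨μ, ψ, h, List.prefix_refl _⟩

theorem Occurs.of_prefix {b : List PrefixedFormula} {μ μ₀ σ : List ℕ} (h : Occurs b μ σ)
    (hμ : μ₀ <+: μ) : Occurs b μ₀ σ := by
  obtain ⟨μ', χ, hmem, hμ'⟩ := h
  exact ⟨μ', χ, hmem, hμ.trans hμ'⟩

theorem occurs_append {N b : List PrefixedFormula} {μ σ : List ℕ} :
    Occurs (N ++ b) μ σ ↔ Occurs N μ σ ∨ Occurs b μ σ := by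
  simp only [Occurs, List.mem_append, or_and_right, exists_or]

/-- The rule for `x` has been applied in `b`; a literal counts as done once the literal rule has
copied it to all shorter model prefixes. -/
def Done (b : List PrefixedFormula) : PrefixedFormula → Prop
  | (μ, σ, .pos p) => ∀ μ₀, μ₀ ≠ [] → μ₀ <+: μ → (μ₀, σ, .pos p) ∈ b
  | (μ, σ, .neg p) => ∀ μ₀, μ₀ ≠ [] → μ₀ <+: μ → (μ₀, σ, .neg p) ∈ b
  | (μ, σ, .and ψ₁ ψ₂) => (μ, σ, ψ₁) ∈ b ∧ (μ, σ, ψ₂) ∈ b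
  | (μ, σ, .or ψ₁ ψ₂) => (μ, σ, ψ₁) ∈ b ∨ (μ, σ, ψ₂) ∈ b
  | (μ, σ, .dia ψ) => ∃ i, (μ, σ ++ [i], ψ) ∈ b
  | (μ, σ, .box ψ) => ∀ i, Occurs b μ (σ ++ [i]) → (μ, σ ++ [i], ψ) ∈ b
  | (μ, σ, .ex ψ) => ∃ m, (μ ++ [m], σ, ψ) ∈ b

theorem done_iff_of_isLiteral {b : List PrefixedFormula} {μ σ : List ℕ} {l : RML}
    (hl : IsLiteral l) :
    Done b (μ, σ, l) ↔ ∀ μ₀, μ₀ ≠ [] → μ₀ <+: μ → (μ₀, σ, l) ∈ b := by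
  cases l <;> first | exact hl.elim | exact .rfl

theorem complete_of_forall_done {b : List PrefixedFormula} (h : ∀ x ∈ b, Done b x) :
    Complete {x | x ∈ b} := by
  refine ⟨fun _ _ _ _ hx => h _ hx, fun _ _ _ _ hx => h _ hx, ?_, fun _ _ _ hx => h _ hx,
    fun _ _ _ hx => h _ hx, ?_⟩
  · intro μ ν σ l hl hμ _ hx
    exact (done_iff_of_isLiteral hl).mp (h _ hx) μ hμ (List.prefix_append _ _)
  · intro μ ν σ i ψ χ hbox hocc
    exact h _ hbox i ⟨_, χ, hocc, List.prefix_append _ _⟩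

theorem Done.append {b N : List PrefixedFormula} {μ σ : List ℕ} {ψ : RML}
    (h : Done b (μ, σ, ψ))
    (hbox : ∀ χ i, ψ = .box χ → Occurs N μ (σ ++ [i]) → (μ, σ ++ [i], χ) ∈ N ++ b) :
    Done (N ++ b) (μ, σ, ψ) := by
  cases ψ with
  | pos p | neg p => exact fun μ₀ h₀ hμ₀ => List.mem_append_right _ (h μ₀ h₀ hμ₀)
  | and ψ₁ ψ₂ => exact ⟨List.mem_append_right _ h.1, List.mem_append_right _ h.2⟩
  | or ψ₁ ψ₂ => exact h.imp (List.mem_append_right _) (List.mem_append_right _)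
  | dia ψ => exact h.imp fun _ => List.mem_append_right _
  | ex ψ => exact h.imp fun _ => List.mem_append_right _
  | box ψ =>
    intro i hi
    rcases occurs_append.mp hi with hN | hb
    · exact hbox ψ i rfl hN
    · exact List.mem_append_right _ (h i hb)

theorem done_or_mem_append {b N P₀ : List PrefixedFormula} {x : PrefixedFormula}
    (hb : ∀ y ∈ b, Done b y ∨ y ∈ x :: P₀) (hx : Done (N ++ b) x)
    (hbox : ∀ μ σ χ i, (μ, σ, .box χ) ∈ b → Done b (μ, σ, .box χ) →
      Occurs N μ (σ ++ [i]) → (μ, σ ++ [i], χ) ∈ N ++ b) :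
    ∀ y ∈ N ++ b, Done (N ++ b) y ∨ y ∈ N ++ P₀ := by
  rintro ⟨μ, σ, ψ⟩ hy
  rcases List.mem_append.mp hy with hy | hy
  · exact .inr (List.mem_append_left _ hy)
  rcases hb _ hy with hd | hp
  · refine .inl (hd.append fun χ i hψ hocc => ?_)
    subst hψ
    exact hbox μ σ χ i hy hd hocc
  rcases List.mem_cons.mp hp with rfl | hp
  · exact .inl hx
  · exact .inr (List.mem_append_right _ hp)

/-- `model μ σ` is the pointed model that the prefix pair `(μ, σ)` denotes; every index used so
far is below `fresh`. -/
structure State where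
  branch : List PrefixedFormula
  pending : List PrefixedFormula
  fresh : ℕ
  model : List ℕ → List ℕ → PointedModel

structure Inv (φ : RML) (s : State) : Prop where
  branch : Branch φ {x | x ∈ s.branch}
  pending_sub : ∀ x ∈ s.pending, x ∈ s.branch
  done : ∀ x ∈ s.branch, Done s.branch x ∨ x ∈ s.pending
  depth : ∀ x ∈ s.branch, x.2.2.modalDepth + x.2.1.length ≤ φ.modalDepth + 1
  lt_fresh : ∀ x ∈ s.branch, ∀ k ∈ x.1 ++ x.2.1, k < s.fresh
  sat : ∀ x ∈ s.branch, (s.model x.1 x.2.1).Sat x.2.2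
  refines : ∀ μ μ' σ, Occurs s.branch μ' σ → μ <+: μ' → (s.model μ' σ).Refines (s.model μ σ)
  succ : ∀ μ σ i, Occurs s.branch μ σ → Occurs s.branch μ (σ ++ [i]) →
    (s.model μ σ).Succ (s.model μ (σ ++ [i]))

/-- Every rule replaces a pending formula by formulas at a longer state prefix, or at the same
state prefix with a smaller formula, or by the same literal at shorter model prefixes. -/
def rank (φ : RML) (x : PrefixedFormula) : Lex (ℕ × Lex (ℕ × ℕ)) :=
  toLex (φ.modalDepth + 1 - x.2.1.length, toLex (x.2.2.size, x.1.length))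

def State.measure (φ : RML) (s : State) : Multiset (Lex (ℕ × Lex (ℕ × ℕ))) :=
  s.pending.map (rank φ)

theorem rank_lt_of_size_lt {φ ψ ψ' : RML} {μ μ' σ : List ℕ} (h : ψ'.size < ψ.size) :
    rank φ (μ', σ, ψ') < rank φ (μ, σ, ψ) := by
  simp [rank, Prod.Lex.toLex_lt_toLex, h]

theorem rank_lt_of_length_lt {φ ψ : RML} {μ μ' σ : List ℕ} (h : μ'.length < μ.length) :
    rank φ (μ', σ, ψ) < rank φ (μ, σ, ψ) := by
  simp [rank, Prod.Lex.toLex_lt_toLex, h]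

theorem rank_lt_of_length_lt_depth {φ ψ ψ' : RML} {μ μ' σ : List ℕ} {i : ℕ}
    (h : σ.length < φ.modalDepth + 1) : rank φ (μ', σ ++ [i], ψ') < rank φ (μ, σ, ψ) := by
  simp only [rank, Prod.Lex.toLex_lt_toLex, List.length_append, List.length_singleton]
  omega

theorem measure_lt {φ : RML} {x : PrefixedFormula} {N P₀ : List PrefixedFormula}
    (h : ∀ z ∈ N, rank φ z < rank φ x) :
    Multiset.IsDershowitzMannaLT (α := Lex (ℕ × Lex (ℕ × ℕ)))
      ((N ++ P₀).map (rank φ)) ((x :: P₀).map (rank φ)) :=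
  ⟨P₀.map (rank φ), N.map (rank φ), {rank φ x}, by simp, by simp [add_comm],
    by rw [add_comm, Multiset.singleton_add, Multiset.cons_coe, List.map_cons], fun y hy => by
      obtain ⟨z, hz, rfl⟩ := List.mem_map.mp (Multiset.mem_coe.mp hy)
      exact ⟨_, Multiset.mem_singleton_self _, h z hz⟩⟩

variable {φ : RML} {s : State} {x : PrefixedFormula} {P₀ : List PrefixedFormula}

def Progress (φ : RML) (s : State) : Prop :=
  ∃ s', Inv φ s' ∧ Multiset.IsDershowitzMannaLT (s'.measure φ) (s.measure φ)

theorem Inv.mem_of_pending (hs : Inv φ s) (hP : s.pending = x :: P₀) : x ∈ s.branch :=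
  hs.pending_sub x (hP ▸ List.mem_cons_self)

theorem Inv.lt_fresh_of_occurs (hs : Inv φ s) {μ σ : List ℕ} (h : Occurs s.branch μ σ) :
    ∀ k ∈ μ ++ σ, k < s.fresh := by
  obtain ⟨μ', χ, hmem, hμ⟩ := h
  intro k hk
  refine hs.lt_fresh _ hmem k ?_
  simp only [List.mem_append] at hk ⊢
  exact hk.imp_left (hμ.subset ·)

theorem Inv.accepting (hs : Inv φ s) : Accepting {x | x ∈ s.branch} :=
  fun ⟨_, _, _, hpos, hneg⟩ => hs.sat _ hneg (hs.sat _ hpos)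

theorem Inv.fresh_not_mem_of_occurs (hs : Inv φ s) {μ σ : List ℕ} (h : Occurs s.branch μ σ) :
    s.fresh ∉ μ ++ σ :=
  fun hn => lt_irrefl _ (hs.lt_fresh_of_occurs h _ hn)

theorem Inv.lt_fresh_add_one (hs : Inv φ s) {μ σ π τ : List ℕ} (h : Occurs s.branch μ σ)
    (hπ : π <+: μ ++ [s.fresh]) (hτ : τ <+: σ ++ [s.fresh]) :
    ∀ k ∈ π ++ τ, k < s.fresh + 1 := by
  intro k hk
  have hμσ := hs.lt_fresh_of_occurs h
  simp only [List.mem_append] at hk hμσ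
  rcases hk with hk | hk
  · rcases List.mem_append.mp (hπ.subset hk) with hk | hk
    · exact Nat.lt_succ_of_lt (hμσ k (.inl hk))
    · exact Nat.lt_succ_of_le (List.mem_singleton.mp hk).le
  · rcases List.mem_append.mp (hτ.subset hk) with hk | hk
    · exact Nat.lt_succ_of_lt (hμσ k (.inr hk))
    · exact Nat.lt_succ_of_le (List.mem_singleton.mp hk).le

theorem Inv.progress (hs : Inv φ s) (hP : s.pending = x :: P₀) {N : List PrefixedFormula}
    {model : List ℕ → List ℕ → PointedModel} (hbranch : Branch φ {y | y ∈ N ++ s.branch})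
    (hx : Done (N ++ s.branch) x)
    (hbox : ∀ μ σ χ i, (μ, σ, .box χ) ∈ s.branch → Done s.branch (μ, σ, .box χ) →
      Occurs N μ (σ ++ [i]) → (μ, σ ++ [i], χ) ∈ N ++ s.branch)
    (hdepth : ∀ z ∈ N, z.2.2.modalDepth + z.2.1.length ≤ φ.modalDepth + 1)
    (hfresh : ∀ z ∈ N, ∀ k ∈ z.1 ++ z.2.1, k < s.fresh + 1)
    (hagree : ∀ μ σ, Occurs s.branch μ σ → model μ σ = s.model μ σ)
    (hsat : ∀ z ∈ N, (model z.1 z.2.1).Sat z.2.2)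
    (hrefines : ∀ μ μ' σ, Occurs N μ' σ → ¬ Occurs s.branch μ' σ → μ <+: μ' →
      (model μ' σ).Refines (model μ σ))
    (hsucc : ∀ μ σ i, Occurs (N ++ s.branch) μ σ → Occurs (N ++ s.branch) μ (σ ++ [i]) →
      ¬ (Occurs s.branch μ σ ∧ Occurs s.branch μ (σ ++ [i])) →
      (model μ σ).Succ (model μ (σ ++ [i])))
    (hrank : ∀ z ∈ N, rank φ z < rank φ x) : Progress φ s := by
  refine ⟨⟨N ++ s.branch, N ++ P₀, s.fresh + 1, model⟩, ⟨hbranch, ?_,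
    done_or_mem_append (hP ▸ hs.done) hx hbox, ?_, ?_, ?_, ?_, ?_⟩,
    by simpa only [State.measure, hP] using measure_lt hrank⟩
  · simp only [List.mem_append]
    exact fun y hy => hy.imp_right fun hy => hs.pending_sub y (hP ▸ List.mem_cons_of_mem _ hy)
  · intro z hz
    rcases List.mem_append.mp hz with hz | hz
    exacts [hdepth z hz, hs.depth z hz]
  · intro z hz
    rcases List.mem_append.mp hz with hz | hz
    exacts [hfresh z hz, fun k hk => Nat.lt_succ_of_lt (hs.lt_fresh z hz k hk)]
  · intro z hz
    rcases List.mem_append.mp hz with hz | hz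
    · exact hsat z hz
    · dsimp only
      rw [hagree _ _ (occurs_of_mem hz)]
      exact hs.sat z hz
  · intro μ μ' σ h hμ
    by_cases hb : Occurs s.branch μ' σ
    · dsimp only
      rw [hagree _ _ hb, hagree _ _ (hb.of_prefix hμ)]
      exact hs.refines μ μ' σ hb hμ
    · exact hrefines μ μ' σ ((occurs_append.mp h).resolve_right hb) hb hμ
  · intro μ σ i h h'
    by_cases hb : Occurs s.branch μ σ ∧ Occurs s.branch μ (σ ++ [i])
    · dsimp only
      rw [hagree _ _ hb.1, hagree _ _ hb.2]
      exact hs.succ μ σ i hb.1 hb.2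
    · exact hsucc μ σ i h h' hb

theorem Inv.progress_of_occurs (hs : Inv φ s) (hP : s.pending = x :: P₀)
    {N : List PrefixedFormula} (hbranch : Branch φ {y | y ∈ N ++ s.branch})
    (hocc : ∀ z ∈ N, Occurs s.branch z.1 z.2.1)
    (hdepth : ∀ z ∈ N, z.2.2.modalDepth + z.2.1.length ≤ φ.modalDepth + 1)
    (hsat : ∀ z ∈ N, (s.model z.1 z.2.1).Sat z.2.2) (hx : Done (N ++ s.branch) x)
    (hrank : ∀ z ∈ N, rank φ z < rank φ x) : Progress φ s := by
  have hocc' : ∀ {μ σ}, Occurs (N ++ s.branch) μ σ → Occurs s.branch μ σ := by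
    intro μ σ h
    rcases occurs_append.mp h with ⟨μ', χ, hz, hμ⟩ | h
    · exact (hocc _ hz).of_prefix hμ
    · exact h
  refine hs.progress hP hbranch hx (fun μ σ χ i _ hd hN => ?_) hdepth
    (fun z hz k hk => Nat.lt_succ_of_lt (hs.lt_fresh_of_occurs (hocc z hz) k hk))
    (fun _ _ _ => rfl) hsat
    (fun μ μ' σ h hb _ => absurd (hocc' (occurs_append.mpr (.inl h))) hb)
    (fun μ σ i h h' hb => absurd ⟨hocc' h, hocc' h'⟩ hb) hrank
  exact List.mem_append_right _ (hd i (hocc' (occurs_append.mpr (.inl hN))))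

theorem Inv.progress_and (hs : Inv φ s) {μ σ : List ℕ} {ψ₁ ψ₂ : RML}
    (hP : s.pending = (μ, σ, .and ψ₁ ψ₂) :: P₀) : Progress φ s := by
  have hx := hs.mem_of_pending hP
  have hd := hs.depth _ hx
  simp only [RML.modalDepth] at hd
  refine hs.progress_of_occurs hP (N := [(μ, σ, ψ₁), (μ, σ, ψ₂)]) ?_ ?_ ?_ ?_ ?_ ?_
  · rw [show {y | y ∈ [(μ, σ, ψ₁), (μ, σ, ψ₂)] ++ s.branch} =
      insert (μ, σ, ψ₁) (insert (μ, σ, ψ₂) {y | y ∈ s.branch}) by ext; simp]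
    exact Branch.andRule hs.branch hx
  · simp [occurs_of_mem hx]
  · simp only [List.mem_cons, List.not_mem_nil, forall_eq_or_imp]
    refine ⟨?_, ?_, fun _ => False.elim⟩ <;> omega
  · obtain ⟨h₁, h₂⟩ := hs.sat _ hx
    simp only [List.mem_cons, List.not_mem_nil, forall_eq_or_imp]
    exact ⟨h₁, h₂, fun _ => False.elim⟩
  · exact ⟨by simp, by simp⟩
  · simp only [List.mem_cons, List.not_mem_nil, forall_eq_or_imp]
    refine ⟨rank_lt_of_size_lt ?_, rank_lt_of_size_lt ?_, fun _ => False.elim⟩ <;>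
      simp only [RML.size] <;> omega

theorem Inv.progress_or (hs : Inv φ s) {μ σ : List ℕ} {ψ₁ ψ₂ : RML}
    (hP : s.pending = (μ, σ, .or ψ₁ ψ₂) :: P₀) : Progress φ s := by
  have hx := hs.mem_of_pending hP
  have hd := hs.depth _ hx
  simp only [RML.modalDepth] at hd
  have key : ∀ ψ, ψ = ψ₁ ∨ ψ = ψ₂ → (s.model μ σ).Sat ψ →
      Branch φ (insert (μ, σ, ψ) {y | y ∈ s.branch}) → Progress φ s := by
    intro ψ hψ hsat hbranch
    refine hs.progress_of_occurs hP (N := [(μ, σ, ψ)]) ?_ (by simp [occurs_of_mem hx]) ?_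
      (by simpa using hsat) ?_ ?_
    · rwa [show {y | y ∈ [(μ, σ, ψ)] ++ s.branch} = insert (μ, σ, ψ) {y | y ∈ s.branch} by
        ext; simp]
    · simp only [List.mem_singleton, forall_eq]
      rcases hψ with rfl | rfl <;> omega
    · rcases hψ with rfl | rfl
      exacts [.inl (by simp), .inr (by simp)]
    · simp only [List.mem_singleton, forall_eq]
      refine rank_lt_of_size_lt ?_
      rcases hψ with rfl | rfl <;> simp only [RML.size] <;> omega
  rcases hs.sat _ hx with h | h
  · exact key ψ₁ (.inl rfl) h (Branch.orLeft hs.branch hx)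
  · exact key ψ₂ (.inr rfl) h (Branch.orRight hs.branch hx)

theorem Inv.progress_literal (hs : Inv φ s) {μ σ : List ℕ} {l : RML}
    (hP : s.pending = (μ, σ, l) :: P₀) (hl : IsLiteral l) : Progress φ s := by
  have hx := hs.mem_of_pending hP
  set N := (μ.inits.filter fun π => π ≠ [] ∧ π ≠ μ).map fun π => (π, σ, l) with hN
  have hmem : ∀ z ∈ N, ∃ π, (π <+: μ ∧ π ≠ [] ∧ π ≠ μ) ∧ z = (π, σ, l) := by
    intro z hz
    obtain ⟨π, hπ, rfl⟩ := List.mem_map.mp hz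
    exact ⟨π, by simpa [List.mem_inits] using hπ, rfl⟩
  refine hs.progress_of_occurs hP (N := N) ?_ ?_ ?_ ?_ ?_ ?_
  · refine Branch.append hs.branch fun z hz t ht hB => ?_
    obtain ⟨π, ⟨⟨ν, rfl⟩, hπ, hν⟩, rfl⟩ := hmem z hz
    exact Branch.litRule hB (ht hx) hl hπ (by rintro rfl; simp at hν)
  · intro z hz
    obtain ⟨π, ⟨hπ, -⟩, rfl⟩ := hmem z hz
    exact (occurs_of_mem hx).of_prefix hπ
  · intro z hz
    obtain ⟨π, -, rfl⟩ := hmem z hz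
    exact (hs.depth _ hx :)
  · intro z hz
    obtain ⟨π, ⟨hπ, -⟩, rfl⟩ := hmem z hz
    exact ((hs.refines π μ σ (occurs_of_mem hx) hπ).sat_iff_of_isLiteral hl).mpr (hs.sat _ hx)
  · refine (done_iff_of_isLiteral hl).mpr fun π hπ hπμ => ?_
    by_cases h : π = μ
    · exact List.mem_append_right _ (h ▸ hx)
    · exact List.mem_append_left _ (by simp [hN, List.mem_inits, hπ, hπμ, h])
  · intro z hz
    obtain ⟨π, ⟨hπ, -, hne⟩, rfl⟩ := hmem z hz
    exact rank_lt_of_length_lt (lt_of_le_of_ne hπ.length_le fun h => hne (hπ.eq_of_length h))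

open Classical in
noncomputable def boxSuccessors (b : List PrefixedFormula) (μ σ : List ℕ) (ψ : RML) :
    List PrefixedFormula :=
  (b.filter fun z => μ <+: z.1 ∧ ∃ i, z.2.1 = σ ++ [i]).map fun z => (μ, z.2.1, ψ)

theorem mem_boxSuccessors {b : List PrefixedFormula} {μ σ : List ℕ} {ψ : RML}
    {z : PrefixedFormula} :
    z ∈ boxSuccessors b μ σ ψ ↔ ∃ i, z = (μ, σ ++ [i], ψ) ∧ Occurs b μ (σ ++ [i]) := by
  simp only [boxSuccessors, List.mem_map, List.mem_filter, decide_eq_true_eq, Occurs]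
  constructor
  · rintro ⟨⟨μ', τ, χ⟩, ⟨hmem, hμ, i, rfl⟩, rfl⟩
    exact ⟨i, rfl, μ', χ, hmem, hμ⟩
  · rintro ⟨i, rfl, μ', χ, hmem, hμ⟩
    exact ⟨(μ', σ ++ [i], χ), ⟨hmem, hμ, i, rfl⟩, rfl⟩

theorem Inv.progress_box (hs : Inv φ s) {μ σ : List ℕ} {ψ : RML}
    (hP : s.pending = (μ, σ, .box ψ) :: P₀) : Progress φ s := by
  have hx := hs.mem_of_pending hP
  have hd := hs.depth _ hx
  simp only [RML.modalDepth] at hd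
  refine hs.progress_of_occurs hP (N := boxSuccessors s.branch μ σ ψ) ?_ ?_ ?_ ?_ ?_ ?_
  · refine Branch.append hs.branch fun z hz t ht hB => ?_
    obtain ⟨i, rfl, μ', χ, hmem, ν, rfl⟩ := mem_boxSuccessors.mp hz
    exact Branch.boxRule hB (ht hx) (ht hmem)
  · intro z hz
    obtain ⟨i, rfl, hocc⟩ := mem_boxSuccessors.mp hz
    exact hocc
  · intro z hz
    obtain ⟨i, rfl, -⟩ := mem_boxSuccessors.mp hz
    simp only [List.length_append, List.length_singleton]
    omega
  · intro z hz
    obtain ⟨i, rfl, hocc⟩ := mem_boxSuccessors.mp hz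
    exact (hs.succ μ σ i (occurs_of_mem hx) hocc).sat_of_sat_box (hs.sat _ hx)
  · intro i hi
    refine List.mem_append_left _ (mem_boxSuccessors.mpr ⟨i, rfl, ?_⟩)
    rcases occurs_append.mp hi with ⟨μ', χ, hz, -⟩ | hb
    · obtain ⟨j, hj, hocc⟩ := mem_boxSuccessors.mp hz
      simp only [Prod.mk.injEq] at hj
      rwa [hj.2.1]
    · exact hb
  · intro z hz
    obtain ⟨i, rfl, -⟩ := mem_boxSuccessors.mp hz
    exact rank_lt_of_length_lt_depth (by omega)

def boxBodyAt (τ : List ℕ) : PrefixedFormula → Option PrefixedFormula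
  | (μ, _, .box χ) => some (μ, τ, χ)
  | _ => none

open Classical in
noncomputable def boxBodies (b : List PrefixedFormula) (μ σ τ : List ℕ) :
    List PrefixedFormula :=
  (b.filter fun z => z.1 <+: μ ∧ z.2.1 = σ).filterMap (boxBodyAt τ)

theorem mem_boxBodies {b : List PrefixedFormula} {μ σ τ : List ℕ} {z : PrefixedFormula} :
    z ∈ boxBodies b μ σ τ ↔ ∃ μ₀ χ, z = (μ₀, τ, χ) ∧ (μ₀, σ, .box χ) ∈ b ∧ μ₀ <+: μ := by
  simp only [boxBodies, List.mem_filterMap, List.mem_filter, decide_eq_true_eq]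
  constructor
  · rintro ⟨⟨μ₀, σ₀, χ⟩, ⟨hmem, hμ₀, rfl⟩, h⟩
    cases χ <;> simp only [boxBodyAt, reduceCtorEq, Option.some.injEq] at h
    exact ⟨μ₀, _, h.symm, hmem, hμ₀⟩
  · rintro ⟨μ₀, χ, rfl, hmem, hμ₀⟩
    exact ⟨(μ₀, σ, .box χ), ⟨hmem, hμ₀, rfl⟩, rfl⟩

noncomputable def diaSuccessors (b : List PrefixedFormula) (μ σ τ : List ℕ) (ψ : RML) :
    List PrefixedFormula :=
  boxBodies b μ σ τ ++ [(μ, τ, ψ)]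

theorem position_of_mem_diaSuccessors {b : List PrefixedFormula} {μ σ τ : List ℕ} {ψ : RML}
    {z : PrefixedFormula} (hz : z ∈ diaSuccessors b μ σ τ ψ) : z.2.1 = τ ∧ z.1 <+: μ := by
  rcases List.mem_append.mp hz with hz | hz
  · obtain ⟨μ₀, χ, rfl, -, hμ₀⟩ := mem_boxBodies.mp hz
    exact ⟨rfl, hμ₀⟩
  · obtain rfl := List.mem_singleton.mp hz
    exact ⟨rfl, List.prefix_refl _⟩

theorem occurs_diaSuccessors_append {b : List PrefixedFormula} {μ σ τ π σ' : List ℕ} {ψ : RML}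
    (h : Occurs (diaSuccessors b μ σ τ ψ ++ b) π σ') :
    (σ' = τ ∧ π <+: μ) ∨ Occurs b π σ' := by
  rcases occurs_append.mp h with ⟨μ', χ, hz, hπ⟩ | h
  · have := position_of_mem_diaSuccessors hz
    exact .inl ⟨this.1, hπ.trans this.2⟩
  · exact .inr h

theorem mem_diaSuccessors_of_box {b : List PrefixedFormula} {μ σ μ₀ σ₀ : List ℕ} {χ ψ : RML}
    {n i : ℕ} (hmem : (μ₀, σ₀, .box χ) ∈ b)
    (h : Occurs (diaSuccessors b μ σ (σ ++ [n]) ψ) μ₀ (σ₀ ++ [i])) :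
    (μ₀, σ₀ ++ [i], χ) ∈ diaSuccessors b μ σ (σ ++ [n]) ψ := by
  obtain ⟨μ', χ', hz, hμ₀⟩ := h
  obtain ⟨hσ₀, hμ'⟩ := position_of_mem_diaSuccessors hz
  obtain ⟨rfl, -⟩ := List.append_inj' hσ₀ rfl
  rw [show σ₀ ++ [i] = σ₀ ++ [n] from hσ₀]
  exact List.mem_append_left _ (mem_boxBodies.mpr ⟨μ₀, χ, rfl, hmem, hμ₀.trans hμ'⟩)

theorem Inv.branch_dia (hs : Inv φ s) {μ σ : List ℕ} {ψ : RML}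
    (hx : (μ, σ, .dia ψ) ∈ s.branch) :
    Branch φ {y | y ∈ diaSuccessors s.branch μ σ (σ ++ [s.fresh]) ψ ++ s.branch} := by
  have h := Branch.diaRule s.fresh hs.branch hx fun μ' χ h =>
    hs.fresh_not_mem_of_occurs (occurs_of_mem h) (List.mem_append_right _ (by simp))
  rw [show insert (μ, σ ++ [s.fresh], ψ) {y | y ∈ s.branch} =
    {y | y ∈ [(μ, σ ++ [s.fresh], ψ)] ++ s.branch} by ext; simp] at h
  rw [diaSuccessors, List.append_assoc]
  refine Branch.append h fun z hz t ht hB => ?_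
  obtain ⟨μ₀, χ, rfl, hmem, ν, rfl⟩ := mem_boxBodies.mp hz
  exact Branch.boxRule (ν := ν) (χ := ψ) hB (ht (List.mem_append_right _ hmem))
    (ht (List.mem_append_left _ (List.mem_singleton_self _)))

theorem Inv.depth_diaSuccessors (hs : Inv φ s) {μ σ τ : List ℕ} {ψ : RML}
    (hx : (μ, σ, .dia ψ) ∈ s.branch) (hτ : τ.length = σ.length + 1) :
    ∀ z ∈ diaSuccessors s.branch μ σ τ ψ,
      z.2.2.modalDepth + z.2.1.length ≤ φ.modalDepth + 1 := by
  intro z hz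
  rcases List.mem_append.mp hz with hz | hz
  · obtain ⟨μ₀, χ, rfl, hmem, -⟩ := mem_boxBodies.mp hz
    have := hs.depth _ hmem
    simp only [RML.modalDepth] at this ⊢
    omega
  · obtain rfl := List.mem_singleton.mp hz
    have := hs.depth _ hx
    simp only [RML.modalDepth] at this ⊢
    omega

/-- The models at the fresh successor `σ.n` are obtained by pulling the `◇`-witness back along
the prefixes of `μ`. -/
theorem Inv.progress_dia (hs : Inv φ s) {μ σ : List ℕ} {ψ : RML}
    (hP : s.pending = (μ, σ, .dia ψ) :: P₀) : Progress φ s := by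
  have hx := hs.mem_of_pending hP
  set τ := σ ++ [s.fresh] with hτ
  have hfresh : ∀ {π σ'}, Occurs s.branch π σ' → s.fresh ∉ σ' := fun h hn =>
    hs.fresh_not_mem_of_occurs h (List.mem_append_right _ hn)
  have hN := @position_of_mem_diaSuccessors s.branch μ σ τ ψ
  obtain ⟨f, hfref, hfsucc, hfsat⟩ := PointedModel.exists_succ_along_prefixes
    (m := fun π => s.model π σ)
    (fun π π' h h' => hs.refines π π' σ ((occurs_of_mem hx).of_prefix h') h) (hs.sat _ hx)
  refine hs.progress hP (N := diaSuccessors s.branch μ σ τ ψ)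
    (model := fun π σ' => if σ' = τ then f π else s.model π σ')
    (hs.branch_dia hx) ⟨s.fresh, by simp [diaSuccessors, τ]⟩
    (fun _ _ _ _ hmem _ h => List.mem_append_left _ (mem_diaSuccessors_of_box hmem h))
    (hs.depth_diaSuccessors hx (by simp [τ]))
    (fun z hz => hs.lt_fresh_add_one (occurs_of_mem hx)
      ((hN hz).2.trans (List.prefix_append _ _)) (by rw [(hN hz).1]))
    (fun π σ' h => if_neg fun hσ' => hfresh h (by simp [hσ', τ])) ?_ ?_ ?_ ?_
  · intro z hz
    simp only [(hN hz).1, if_true]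
    rcases List.mem_append.mp hz with hz | hz
    · obtain ⟨μ₀, χ, rfl, hmem, hμ₀⟩ := mem_boxBodies.mp hz
      exact (hfsucc μ₀ hμ₀).sat_of_sat_box (hs.sat _ hmem)
    · obtain rfl := List.mem_singleton.mp hz
      exact hfsat
  · intro π π' σ' h hb hπ
    obtain ⟨rfl, hπ'⟩ :=
      (occurs_diaSuccessors_append (occurs_append.mpr (.inl h))).resolve_right hb
    simp only [if_true]
    exact hfref π π' hπ hπ'
  · intro π σ' i h₁ h₂ hb
    rcases occurs_diaSuccessors_append h₂ with ⟨hσi, hπ⟩ | hb₂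
    · obtain ⟨rfl, -⟩ := List.append_inj' hσi rfl
      simp only [if_neg (show σ' ≠ τ by simp [τ]), if_pos hσi]
      exact hfsucc π hπ
    · rcases occurs_diaSuccessors_append h₁ with ⟨rfl, -⟩ | hb₁
      · exact absurd (by simp [τ]) (hfresh hb₂)
      · exact absurd ⟨hb₁, hb₂⟩ hb
  · intro z hz
    obtain ⟨μ', σ', χ⟩ := z
    obtain ⟨rfl, -⟩ := hN hz
    have hd := hs.depth _ hx
    simp only [RML.modalDepth] at hd
    exact rank_lt_of_length_lt_depth (by omega)

theorem occurs_cons_append {b : List PrefixedFormula} {μ σ π σ' : List ℕ} {χ ψ : RML} {m : ℕ}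
    (hx : (μ, σ, χ) ∈ b) (h : Occurs ([(μ ++ [m], σ, ψ)] ++ b) π σ') :
    (π = μ ++ [m] ∧ σ' = σ) ∨ Occurs b π σ' := by
  rcases occurs_append.mp h with ⟨μ', χ', hz, hπ⟩ | h
  · obtain ⟨rfl, rfl, rfl⟩ : μ' = μ ++ [m] ∧ σ' = σ ∧ χ' = ψ := by simpa using hz
    rcases List.prefix_concat_iff.mp hπ with rfl | hπ
    · exact .inl ⟨rfl, rfl⟩
    · exact .inr ((occurs_of_mem hx).of_prefix hπ)
  · exact .inr h

theorem Inv.progress_ex (hs : Inv φ s) {μ σ : List ℕ} {ψ : RML}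
    (hP : s.pending = (μ, σ, .ex ψ) :: P₀) : Progress φ s := by
  have hx := hs.mem_of_pending hP
  obtain ⟨W', M', w', hrefines, hψ⟩ := hs.sat _ hx
  have hfresh : ∀ {π σ'}, Occurs s.branch π σ' → π ≠ μ ++ [s.fresh] := by
    rintro π σ' h rfl
    exact hs.fresh_not_mem_of_occurs h (by simp)
  refine hs.progress hP (N := [(μ ++ [s.fresh], σ, ψ)])
    (model := fun π σ' => if π = μ ++ [s.fresh] then ⟨W', M', w'⟩ else s.model π σ')
    ?_ ⟨s.fresh, by simp⟩ ?_ (by simpa [RML.modalDepth] using hs.depth _ hx)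
    (fun z hz => by
      obtain rfl := List.mem_singleton.mp hz
      exact hs.lt_fresh_add_one (occurs_of_mem hx) (List.prefix_refl _) (List.prefix_append _ _))
    (fun π σ' h => if_neg (hfresh h))
    (fun z hz => by
      obtain rfl := List.mem_singleton.mp hz
      rw [if_pos rfl]
      exact hψ) ?_ ?_
    (by simpa using rank_lt_of_size_lt (by simp [RML.size]))
  · have h := Branch.exRule s.fresh hs.branch hx fun σ' χ h => hfresh (occurs_of_mem h) rfl
    rwa [show insert (μ ++ [s.fresh], σ, ψ) {y | y ∈ s.branch} =
      {y | y ∈ [(μ ++ [s.fresh], σ, ψ)] ++ s.branch} by ext; simp] at h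
  · rintro μ₀ σ₀ χ i hmem hdone hN
    rcases occurs_cons_append hx (occurs_append.mpr (.inl hN)) with ⟨h, -⟩ | hb
    · exact absurd h (hfresh (occurs_of_mem hmem))
    · exact List.mem_append_right _ (hdone i hb)
  · intro π π' σ' h hb hπ
    obtain ⟨rfl, rfl⟩ :=
      (occurs_cons_append hx (occurs_append.mpr (.inl h))).resolve_right hb
    rcases List.prefix_concat_iff.mp hπ with rfl | hπμ
    · exact .refl _
    · simp only [if_neg (hfresh ((occurs_of_mem hx).of_prefix hπμ))]
      exact PointedModel.Refines.trans hrefines (hs.refines π μ _ (occurs_of_mem hx) hπμ)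
  · intro π σ' i h₁ h₂ hb
    rcases occurs_cons_append hx h₁ with ⟨rfl, rfl⟩ | hb₁
    · rcases occurs_cons_append hx h₂ with ⟨-, h⟩ | hb₂
      · exact absurd (congrArg List.length h) (by simp)
      · exact absurd rfl (hfresh hb₂)
    · rcases occurs_cons_append hx h₂ with ⟨h, -⟩ | hb₂
      · exact absurd h (hfresh hb₁)
      · exact absurd ⟨hb₁, hb₂⟩ hb

theorem Inv.progress_of_cons (hs : Inv φ s) {x : PrefixedFormula}
    (hP : s.pending = x :: P₀) : Progress φ s := by
  obtain ⟨μ, σ, ψ⟩ := x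
  cases ψ with
  | pos p | neg p => exact hs.progress_literal hP trivial
  | and ψ₁ ψ₂ => exact hs.progress_and hP
  | or ψ₁ ψ₂ => exact hs.progress_or hP
  | dia ψ => exact hs.progress_dia hP
  | box ψ => exact hs.progress_box hP
  | ex ψ => exact hs.progress_ex hP

theorem Inv.exists_complete_accepting (hs : Inv φ s) :
    ∃ b, Branch φ b ∧ Complete b ∧ Accepting b := by
  induction s using
    (InvImage.wf (State.measure φ) Multiset.wellFounded_isDershowitzMannaLT).induction with
  | _ s ih =>
    rcases hP : s.pending with _ | ⟨x, P₀⟩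
    · refine ⟨_, hs.branch, complete_of_forall_done fun x hx => ?_, hs.accepting⟩
      simpa [hP] using hs.done x hx
    · obtain ⟨s', hs', hlt⟩ := hs.progress_of_cons hP
      exact ih s' hlt hs'

theorem inv_init {W : Type} {M : Kripke W} {w : W} (h : Sat M w φ) :
    Inv φ ⟨[([1], [1], φ)], [([1], [1], φ)], 2, fun _ _ => ⟨W, M, w⟩⟩ := by
  refine ⟨by simpa using Branch.init, fun _ h => h, fun _ h => .inr h, by simp, by simp,
    fun x hx => ?_, fun _ _ _ _ _ => .refl _, ?_⟩
  · obtain rfl := List.mem_singleton.mp hx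
    exact h
  rintro μ σ i ⟨μ₁, χ₁, h₁, -⟩ ⟨μ₂, χ₂, h₂, -⟩
  simp only [List.mem_singleton, Prod.mk.injEq] at h₁ h₂
  obtain ⟨-, rfl, -⟩ := h₁
  simp at h₂

end Tableau

/-- An RML^∃ formula `φ` is satisfiable iff there exists a
complete accepting tableau branch starting from `(1,1) φ`. -/
theorem satisfiable_iff_complete_accepting_branch (φ : RML) :
    Satisfiable φ ↔
      ∃ b : Set PrefixedFormula, Branch φ b ∧ Complete b ∧ Accepting b := by
  constructor
  · rintro ⟨W, M, w, h⟩
    exact (Tableau.inv_init h).exists_complete_accepting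
  · rintro ⟨b, hB, hC, hA⟩
    exact ⟨List ℕ, canonicalModel b [1], [1], sat_canonicalModel hB hC hA φ [1] [1] hB.init_mem⟩
end

section
/- Let b be a tableau branch for an RML^∃ formula φ. If some prefixed formula with model prefix μ.m (for μ a nonempty string and m ∈ ℕ) occurs in b, then b contains a prefixed formula of the form (μ,σ) ∃_r χ for some state prefix σ and some RML^∃ formula χ. Similarly, if some prefixed formula with state prefix σ.i occurs in b (for σ a nonempty string and i ∈ ℕ), then b contains a prefixed formula of the form (μ,σ) ◇χ or (μ,σ) □χ for some model prefix μ and some formula χ. -/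
/-!
Every rule only creates prefixes out of prefixes already present: `∃_r` extends the model
prefix of an `∃_r` formula by one entry, `◇`/`□` extend the state prefix of a `◇`/`□`
formula by one entry, and the literal rule shortens a model prefix. Because of the last rule
the invariant on model prefixes has to cover every proper nonempty prefix, not only the
one obtained by dropping the last entry; the theorem then follows by induction on the branch.
-/

section

variable {b b' : Set PrefixedFormula}

def HasExAt (b : Set PrefixedFormula) (μ : List ℕ) : Prop :=
  ∃ σ χ, (μ, σ, RML.ex χ) ∈ b

def HasModalAt (b : Set PrefixedFormula) (σ : List ℕ) : Prop :=
  ∃ μ χ, (μ, σ, RML.dia χ) ∈ b ∨ (μ, σ, RML.box χ) ∈ b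

def ModelPrefixGrounded (b : Set PrefixedFormula) (μ : List ℕ) : Prop :=
  ∀ μ₀ ν, μ₀ ≠ [] → ν ≠ [] → μ = μ₀ ++ ν → HasExAt b μ₀

def StatePrefixGrounded (b : Set PrefixedFormula) (σ : List ℕ) : Prop :=
  ∀ σ₀ i, σ₀ ≠ [] → σ = σ₀ ++ [i] → HasModalAt b σ₀

structure PrefixesGrounded (b : Set PrefixedFormula) : Prop where
  model {μ σ ψ} : (μ, σ, ψ) ∈ b → ModelPrefixGrounded b μ
  state {μ σ ψ} : (μ, σ, ψ) ∈ b → StatePrefixGrounded b σ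

theorem HasExAt.mono {μ : List ℕ} (hbb' : b ⊆ b') : HasExAt b μ → HasExAt b' μ :=
  fun ⟨σ, χ, h⟩ => ⟨σ, χ, hbb' h⟩

theorem HasModalAt.mono {σ : List ℕ} (hbb' : b ⊆ b') : HasModalAt b σ → HasModalAt b' σ :=
  fun ⟨μ, χ, h⟩ => ⟨μ, χ, h.imp (@hbb' _) (@hbb' _)⟩

theorem ModelPrefixGrounded.mono {μ : List ℕ} (hbb' : b ⊆ b') (h : ModelPrefixGrounded b μ) :
    ModelPrefixGrounded b' μ :=
  fun μ₀ ν hμ₀ hν hμ => (h μ₀ ν hμ₀ hν hμ).mono hbb'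

theorem StatePrefixGrounded.mono {σ : List ℕ} (hbb' : b ⊆ b') (h : StatePrefixGrounded b σ) :
    StatePrefixGrounded b' σ :=
  fun σ₀ i hσ₀ hσ => (h σ₀ i hσ₀ hσ).mono hbb'

theorem modelPrefixGrounded_singleton (a : ℕ) : ModelPrefixGrounded b [a] := by
  intro μ₀ ν hμ₀ hν h
  simp_all [List.singleton_eq_append_iff]

theorem statePrefixGrounded_singleton (a : ℕ) : StatePrefixGrounded b [a] := by
  intro σ₀ i hσ₀ h
  simp_all [List.singleton_eq_append_iff]

theorem ModelPrefixGrounded.of_append {μ ν : List ℕ} (h : ModelPrefixGrounded b (μ ++ ν))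
    (hμ : μ ≠ []) : ModelPrefixGrounded b μ := by
  rintro μ₀ ν₀ hμ₀ hν₀ rfl
  exact h μ₀ (ν₀ ++ ν) hμ₀ (by simp [hν₀]) (List.append_assoc ..)

theorem ModelPrefixGrounded.append_singleton {μ : List ℕ} (h : ModelPrefixGrounded b μ)
    (hex : HasExAt b μ) (m : ℕ) : ModelPrefixGrounded b (μ ++ [m]) := by
  intro μ₀ ν hμ₀ hν hμ
  obtain ⟨ν', j, rfl⟩ := ν.eq_nil_or_concat'.resolve_left hν
  rw [← List.append_assoc] at hμ
  obtain ⟨rfl, -⟩ := List.append_inj' hμ rfl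
  rcases eq_or_ne ν' [] with rfl | hν'
  · simpa using hex
  · exact h μ₀ ν' hμ₀ hν' rfl

theorem StatePrefixGrounded.append_singleton {σ : List ℕ} (hmodal : HasModalAt b σ) (i : ℕ) :
    StatePrefixGrounded b (σ ++ [i]) := by
  intro σ₀ j _ hσ
  rwa [List.append_inj_left' hσ rfl] at hmodal

theorem PrefixesGrounded.insert {μ σ : List ℕ} {ψ : RML} (h : PrefixesGrounded b)
    (hmodel : ModelPrefixGrounded b μ) (hstate : StatePrefixGrounded b σ) :
    PrefixesGrounded (Insert.insert (μ, σ, ψ) b) := by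
  have hsub : b ⊆ Insert.insert (μ, σ, ψ) b := Set.subset_insert _ b
  constructor
  · intro μ' σ' ψ' hmem
    simp only [Set.mem_insert_iff, Prod.mk.injEq] at hmem
    rcases hmem with ⟨rfl, -, -⟩ | hold
    · exact hmodel.mono hsub
    · exact (h.model hold).mono hsub
  · intro μ' σ' ψ' hmem
    simp only [Set.mem_insert_iff, Prod.mk.injEq] at hmem
    rcases hmem with ⟨-, rfl, -⟩ | hold
    · exact hstate.mono hsub
    · exact (h.state hold).mono hsub

theorem Branch.prefixesGrounded {φ : RML} (hb : Branch φ b) : PrefixesGrounded b := by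
  induction hb with
  | init =>
    constructor <;> rintro _ _ _ ⟨⟩
    exacts [modelPrefixGrounded_singleton 1, statePrefixGrounded_singleton 1]
  | andRule _ hmem ih =>
    exact (ih.insert (ih.model hmem) (ih.state hmem)).insert
      ((ih.model hmem).mono (Set.subset_insert _ _)) ((ih.state hmem).mono (Set.subset_insert _ _))
  | orLeft _ hmem ih | orRight _ hmem ih =>
    exact ih.insert (ih.model hmem) (ih.state hmem)
  | litRule _ hmem _ hμ _ ih =>
    exact ih.insert ((ih.model hmem).of_append hμ) (ih.state hmem)
  | diaRule i _ hmem _ ih =>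
    exact ih.insert (ih.model hmem) (StatePrefixGrounded.append_singleton ⟨_, _, .inl hmem⟩ i)
  | exRule m _ hmem _ ih =>
    exact ih.insert ((ih.model hmem).append_singleton ⟨_, _, hmem⟩ m) (ih.state hmem)
  | boxRule _ hmem _ ih =>
    exact ih.insert (ih.model hmem) (StatePrefixGrounded.append_singleton ⟨_, _, .inr hmem⟩ _)

end

/-- In any tableau branch `b` for `φ`: if some prefixed formula
with model prefix `μ.m` occurs in `b` (for `μ` nonempty), then `b` contains
some `(μ,σ) ∃_r χ`; and if some prefixed formula with state prefix `σ.i`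
occurs in `b` (for `σ` nonempty), then `b` contains some `(μ,σ) ◇χ` or
`(μ,σ) □χ`. -/
theorem extended_prefix_origin (φ : RML) (b : Set PrefixedFormula)
    (hb : Branch φ b) :
    (∀ (μ : List ℕ) (m : ℕ) (σ' : List ℕ) (ψ : RML), μ ≠ [] →
        (μ ++ [m], σ', ψ) ∈ b → ∃ (σ : List ℕ) (χ : RML), (μ, σ, RML.ex χ) ∈ b) ∧
    (∀ (μ' σ : List ℕ) (i : ℕ) (ψ : RML), σ ≠ [] →
        (μ', σ ++ [i], ψ) ∈ b → ∃ (μ : List ℕ) (χ : RML),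
          (μ, σ, RML.dia χ) ∈ b ∨ (μ, σ, RML.box χ) ∈ b) := by
  have hgrounded := hb.prefixesGrounded
  exact ⟨fun μ m _ _ hμ hmem => hgrounded.model hmem μ [m] hμ (List.cons_ne_nil _ _) rfl,
    fun _ σ i _ hσ hmem => hgrounded.state hmem σ i hσ rfl⟩
end

section
/- Let ψ be a variable-free modal formula (built from ⊤, ⊥, ∧, ∨, ◇, □, with no propositional variables and no refinement quantifiers), and let M₀ be the Kripke model consisting of a single state s₀ with a transition from s₀ to itself and V₀(s₀)=∅. Then M₀,s₀ ⊨ ∃_r ψ if and only if ψ is satisfiable in some pointed Kripke model. Consequently, the map ψ ↦ (M₀, s₀, ∃_r ψ) reduces satisfiability of variable-free modal formulas to model checking of RML formulas with a single refinement quantifier. -/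
/-- Variable-free modal formulas: ⊤ | ⊥ | ψ∧ψ | ψ∨ψ | ◇ψ | □ψ. -/
inductive ModalFormula : Type where
  | top : ModalFormula
  | bot : ModalFormula
  | and : ModalFormula → ModalFormula → ModalFormula
  | or  : ModalFormula → ModalFormula → ModalFormula
  | dia : ModalFormula → ModalFormula
  | box : ModalFormula → ModalFormula

/-- Standard Kripke semantics of variable-free modal formulas. -/
def SatM {W : Type} (M : Kripke W) : W → ModalFormula → Prop
  | _, ModalFormula.top => True
  | _, ModalFormula.bot => False
  | s, ModalFormula.and ψ₁ ψ₂ => SatM M s ψ₁ ∧ SatM M s ψ₂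
  | s, ModalFormula.or ψ₁ ψ₂ => SatM M s ψ₁ ∨ SatM M s ψ₂
  | s, ModalFormula.dia ψ => ∃ t, M.R s t ∧ SatM M t ψ
  | s, ModalFormula.box ψ => ∀ t, M.R s t → SatM M t ψ

/-- The model with a single state `s₀`, a transition from `s₀` to itself, and
`V₀(s₀) = ∅`. -/
def M₀ : Kripke Unit := ⟨fun _ _ => True, fun _ => (∅ : Set ℕ)⟩

theorem satM_iff_of_R_eq {W : Type} {M M' : Kripke W} (hR : M.R = M'.R) (s : W)
    (ψ : ModalFormula) : SatM M s ψ ↔ SatM M' s ψ := by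
  induction ψ generalizing s with
  | top | bot => rfl
  | and ψ₁ ψ₂ ih₁ ih₂ => simp only [SatM, ih₁, ih₂]
  | or ψ₁ ψ₂ ih₁ ih₂ => simp only [SatM, ih₁, ih₂]
  | dia ψ ih => simp only [SatM, ih, hR]
  | box ψ ih => simp only [SatM, ih, hR]

theorem refinementOf_M₀ {W : Type} (M : Kripke W) (hV : ∀ w, M.V w = ∅) (s : W) :
    RefinementOf M s M₀ () :=
  ⟨fun _ _ => True, ⟨⟨(), s, trivial⟩, fun _ w _ => (hV w).symm,
    fun _ _ _ _ _ => ⟨(), trivial, trivial⟩⟩, trivial⟩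

/-- For a variable-free modal formula `ψ`,
`M₀, s₀ ⊨ ∃_r ψ` (i.e., some pointed refinement of `(M₀,s₀)` satisfies `ψ`)
iff `ψ` is satisfiable in some pointed Kripke model. -/
theorem modelCheck_exr_iff_satisfiable (ψ : ModalFormula) :
    (∃ (W' : Type) (M' : Kripke W') (s' : W'),
        RefinementOf M' s' M₀ () ∧ SatM M' s' ψ) ↔
      (∃ (W : Type) (M : Kripke W) (s : W), SatM M s ψ) := by
  constructor
  · rintro ⟨W', M', s', -, hψ⟩
    exact ⟨W', M', s', hψ⟩
  · rintro ⟨W, M, s, hψ⟩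
    let M' : Kripke W := ⟨M.R, fun _ => ∅⟩
    have hψ' : SatM M' s ψ := (satM_iff_of_R_eq (show M.R = M'.R from rfl) s ψ).mp hψ
    exact ⟨W, M', s, refinementOf_M₀ M' (fun _ => rfl) s, hψ'⟩
end
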